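/- arXiv:2511.23406 — 8 statements merged into one kernel-verified Lean document; each statement's English description precedes it below -/
import Mathlib

section
/- Let q be a prime power and α₁,...,αₙ be distinct nonzero elements of F_q, and u₁,...,uₙ nonzero elements of F_q. Define v_i = u_i⁻¹ · (∏_{j≠i} (α_j − α_i))⁻¹. Then for any 0 ≤ k ≤ n, the GRS code {(u₁f(α₁),...,uₙf(αₙ)) : f ∈ F_q[x], deg f < k} and the GRS code {(v₁g(α₁),...,vₙg(αₙ)) : g ∈ F_q[x], deg g < n−k} are dual codes: for every such f and g, ∑_{i=1}^n u_i f(α_i) · v_i g(α_i) = 0. -/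
/-!
The coefficient of `X ^ (n - 1)` in the Lagrange interpolant through `(α i, P (α i))` is
`∑ i, P (α i) / ∏_{j ≠ i} (α i - α j)`; for `deg P < n` this interpolant is `P` itself, so the
sum vanishes once `deg P < n - 1`. Each term of the duality sum is `(f g)(α i)` divided by
`∏_{j ≠ i} (α j - α i)`, and `deg (f g) < n - 1`.
-/

open Polynomial Finset

theorem Polynomial.degree_mul_lt_of_degree_lt {R : Type*} [Semiring R] [NoZeroDivisors R]
    {p q : R[X]} {a b : ℕ} (hp : p.degree < a) (hq : q.degree < b) :
    (p * q).degree < ↑(a + b - 1) := by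
  rcases eq_or_ne p 0 with rfl | hp0
  · simp
  rcases eq_or_ne q 0 with rfl | hq0
  · simp
  rw [← natDegree_lt_iff_degree_lt hp0] at hp
  rw [← natDegree_lt_iff_degree_lt hq0] at hq
  rw [← natDegree_lt_iff_degree_lt (mul_ne_zero hp0 hq0), natDegree_mul hp0 hq0]
  omega

namespace Lagrange

variable {F ι : Type*} [Field F] [DecidableEq ι] {s : Finset ι} {v : ι → F}

theorem sum_eval_div_prod_sub_eq_zero (hvs : Set.InjOn v s) {P : F[X]}
    (hP : P.degree < ↑(#s - 1)) :
    ∑ i ∈ s, P.eval (v i) / ∏ j ∈ s.erase i, (v j - v i) = 0 := by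
  have hPs : P.degree < #s := hP.trans_le (by exact_mod_cast Nat.sub_le _ _)
  have hsign : ∀ i ∈ s, ∏ j ∈ s.erase i, (v j - v i) =
      (-1) ^ (#s - 1) * ∏ j ∈ s.erase i, (v i - v j) := fun i hi => by
    rw [← card_erase_of_mem hi, ← prod_neg]
    simp only [neg_sub]
  rw [sum_congr rfl fun i hi => by rw [hsign i hi, div_mul_eq_div_div_swap], ← sum_div,
    ← coeff_eq_sum hvs hPs, coeff_eq_zero_of_degree_lt hP, zero_div]

end Lagrange

theorem grs_dual_general (F : Type*) [Field F] (n : ℕ)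
    (α u v : Fin n → F)
    (hα : Function.Injective α)
    (hu : ∀ i, u i ≠ 0)
    (hv : ∀ i, v i = (u i)⁻¹ * (∏ j ∈ Finset.univ.erase i, (α j - α i))⁻¹)
    (k : ℕ) (hk : k ≤ n)
    (f g : Polynomial F)
    (hf : f.degree < (k : WithBot ℕ))
    (hg : g.degree < ((n - k : ℕ) : WithBot ℕ)) :
    ∑ i, (u i * f.eval (α i)) * (v i * g.eval (α i)) = 0 := by
  have hterm : ∀ i, (u i * f.eval (α i)) * (v i * g.eval (α i)) =
      (f * g).eval (α i) / ∏ j ∈ univ.erase i, (α j - α i) := fun i => by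
    rw [hv, eval_mul]
    field_simp [hu i]
  have hfg : (f * g).degree < ↑(#(univ : Finset (Fin n)) - 1) := by
    simpa [Nat.add_sub_cancel' hk] using degree_mul_lt_of_degree_lt hf hg
  simpa only [hterm] using Lagrange.sum_eval_div_prod_sub_eq_zero hα.injOn hfg

/-- Duality of GRS codes: with `v i = (u i)⁻¹ (∏_{j≠i} (α j - α i))⁻¹`, every codeword
of `GRS(α,u)` of dimension `k` is orthogonal to every codeword of `GRS(α,v)` of
dimension `n - k`. -/
theorem grs_dual (F : Type*) [Field F] [Fintype F] (n : ℕ)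
    (α u v : Fin n → F)
    (hα : Function.Injective α) (hα0 : ∀ i, α i ≠ 0)
    (hu : ∀ i, u i ≠ 0)
    (hv : ∀ i, v i = (u i)⁻¹ * (∏ j ∈ Finset.univ.erase i, (α j - α i))⁻¹)
    (k : ℕ) (hk : k ≤ n)
    (f g : Polynomial F)
    (hf : f.degree < (k : WithBot ℕ))
    (hg : g.degree < ((n - k : ℕ) : WithBot ℕ)) :
    ∑ i, (u i * f.eval (α i)) * (v i * g.eval (α i)) = 0 :=
  grs_dual_general F n α u v hα hu hv k hk f g hf hg
end

section
/- Let n ≥ 2 be a natural number. Define α = (α₁, α₂) with α₁ = (0,1,...,n²−1) and α₂ = (n⁴, n⁴+1, ..., n⁴+n²−1), and β = (β₁, β₂) with β₁ = (0,1,...,n²−1) and β₂ = (2n²−1, 3n²−1, ..., n⁴+n²−1). Then the set of all pairwise sums {αᵢ + βⱼ : i,j} ⊆ ℕ has cardinality exactly 2n⁴ + 2n² − 1. -/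
open Finset Pointwise

/-- For `K = L = T = n²` the degree-table sumset has exactly `2n⁴ + 2n² − 1` elements. -/
theorem sumset_card_n2 (n : ℕ) (hn : 2 ≤ n) :
    ((Finset.range (n^2) ∪ (Finset.range (n^2)).image (fun i => n^4 + i)) +
     (Finset.range (n^2) ∪ (Finset.range (n^2)).image (fun k => (k + 2) * n^2 - 1))).card
      = 2 * n^4 + 2 * n^2 - 1 := by
  have hm : 2 ≤ n ^ 2 := by nlinarith
  have e4 : n ^ 4 = n ^ 2 * n ^ 2 := by ring
  have key : ((Finset.range (n^2) ∪ (Finset.range (n^2)).image (fun i => n^4 + i)) +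
     (Finset.range (n^2) ∪ (Finset.range (n^2)).image (fun k => (k + 2) * n^2 - 1)))
      = Finset.range (2 * n^4 + 2 * n^2 - 1) := by
    ext x
    simp only [Finset.mem_add, Finset.mem_union, Finset.mem_image, Finset.mem_range]
    constructor
    · rintro ⟨a, ha, b, hb, rfl⟩
      rcases ha with ha | ⟨i, hi, rfl⟩ <;>
        rcases hb with hb | ⟨k, hk, rfl⟩ <;>
        [skip;
         (have hb1 : (k + 2) * n ^ 2 ≤ n ^ 2 * n ^ 2 + n ^ 2 := by nlinarith;
          have hb2 : 2 ≤ (k + 2) * n ^ 2 := le_trans hm (Nat.le_mul_of_pos_left _ (by omega)));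
         skip;
         (have hb1 : (k + 2) * n ^ 2 ≤ n ^ 2 * n ^ 2 + n ^ 2 := by nlinarith;
          have hb2 : 2 ≤ (k + 2) * n ^ 2 := le_trans hm (Nat.le_mul_of_pos_left _ (by omega)))] <;>
        omega
    · intro hx
      by_cases h1 : x < n ^ 2
      · exact ⟨x, Or.inl h1, 0, Or.inl (by omega), by omega⟩
      by_cases h2 : x ≤ 2 * n ^ 2 - 2
      · exact ⟨n ^ 2 - 1, Or.inl (by omega), x - (n ^ 2 - 1), Or.inl (by omega), by omega⟩
      by_cases h3 : x ≤ n ^ 4 + 2 * n ^ 2 - 2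
      · -- middle range : a = r ∈ range, b = (q+2)n²−1
        set y := x + 1 - 2 * n ^ 2 with hy
        have hylt : y < n ^ 2 * n ^ 2 := by omega
        have hq : y / n ^ 2 < n ^ 2 :=
          (Nat.div_lt_iff_lt_mul (by omega)).2 hylt
        have hdm := Nat.div_add_mod y (n ^ 2)
        have hr : y % n ^ 2 < n ^ 2 := Nat.mod_lt _ (by omega)
        refine ⟨y % n ^ 2, Or.inl hr, (y / n ^ 2 + 2) * n ^ 2 - 1,
          Or.inr ⟨y / n ^ 2, hq, rfl⟩, ?_⟩
        have h5 : (y / n ^ 2 + 2) * n ^ 2 = n ^ 2 * (y / n ^ 2) + 2 * n ^ 2 := by ring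
        omega
      · -- upper range : a = n⁴ + r, b = (q+2)n²−1
        set y := x + 1 - 2 * n ^ 2 - n ^ 4 with hy
        have hylt : y < n ^ 2 * n ^ 2 := by omega
        have hq : y / n ^ 2 < n ^ 2 :=
          (Nat.div_lt_iff_lt_mul (by omega)).2 hylt
        have hdm := Nat.div_add_mod y (n ^ 2)
        have hr : y % n ^ 2 < n ^ 2 := Nat.mod_lt _ (by omega)
        refine ⟨n ^ 4 + y % n ^ 2, Or.inr ⟨y % n ^ 2, hr, rfl⟩,
          (y / n ^ 2 + 2) * n ^ 2 - 1, Or.inr ⟨y / n ^ 2, hq, rfl⟩, ?_⟩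
        have h5 : (y / n ^ 2 + 2) * n ^ 2 = n ^ 2 * (y / n ^ 2) + 2 * n ^ 2 := by ring
        omega
  rw [key, Finset.card_range]
end

section
/- Let n ≥ 2 and m ≥ k ≥ 2 be natural numbers. Define α = (α₁, α₂) with α₁ = (0,1,...,nᵐ−1) and α₂ = (nᵐ+n²ᵏ−nᵏ, nᵐ+n²ᵏ−nᵏ+1, ..., nᵐ+n²ᵏ−1), and β = (β₁, β₂) with β₁ = (0,1,...,nᵐ−1) and β₂ = (2nᵐ−1, 2nᵐ+nᵏ−1, 2nᵐ+2nᵏ−1, ..., 2nᵐ+n²ᵏ−nᵏ−1). Then |{αᵢ + βⱼ}| = 2n²ᵏ + 3nᵐ − nᵏ − 1. -/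
open Finset Pointwise

lemma key (K T : ℕ) (hK : 4 ≤ K) (hKT : K ≤ T) :
    ((Finset.range T ∪ (Finset.range K).image (fun i => T + K*K - K + i)) +
     (Finset.range T ∪ (Finset.range K).image (fun j => 2*T + j*K - 1))).card
      = 2 * (K*K) + 3 * T - K - 1 := by
  have hKK : K ≤ K*K := Nat.le_mul_of_pos_left K (by omega)
  have hset : ((Finset.range T ∪ (Finset.range K).image (fun i => T + K*K - K + i)) +
     (Finset.range T ∪ (Finset.range K).image (fun j => 2*T + j*K - 1)))
      = Finset.range (2 * (K*K) + 3 * T - K - 1) := by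
    ext x
    simp only [Finset.mem_add, Finset.mem_union, Finset.mem_range, Finset.mem_image]
    constructor
    · rintro ⟨a, ha, b, hb, rfl⟩
      rcases ha with ha | ⟨i, hi, rfl⟩ <;> rcases hb with hb | ⟨j, hj, rfl⟩
      · omega
      · have h1 : j * K ≤ K*K - K := by
          have : j * K ≤ (K-1) * K := Nat.mul_le_mul_right K (by omega)
          have : (K-1)*K = K*K - K := by rw [Nat.sub_mul]; omega
          omega
        omega
      · omega
      · have h1 : j * K ≤ K*K - K := by
          have h2 : j * K ≤ (K-1) * K := Nat.mul_le_mul_right K (by omega)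
          have : (K-1)*K = K*K - K := by rw [Nat.sub_mul]; omega
          omega
        omega
    · intro hx
      by_cases h1 : x ≤ 2*T - 2
      · by_cases h2 : x < T
        · exact ⟨x, Or.inl h2, 0, Or.inl (by omega), by omega⟩
        · exact ⟨T-1, Or.inl (by omega), x - (T-1), Or.inl (by omega), by omega⟩
      · by_cases h2 : x ≤ 3*T + K*K - K - 2
        · -- middle region
          set r := x - (2*T - 1) with hr
          by_cases h3 : r / K ≤ K - 1
          · refine ⟨r % K, Or.inl ?_, 2*T + (r/K)*K - 1,
              Or.inr ⟨r/K, by omega, rfl⟩, ?_⟩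
            · have := Nat.mod_lt r (show 0 < K by omega); omega
            · have hdm : (r/K)*K + r % K = r := by
                rw [mul_comm]; exact Nat.div_add_mod r K
              omega
          · have hge : K*K ≤ r := by
              have := Nat.div_mul_le_self r K
              have h4 : K * K ≤ (r / K) * K := Nat.mul_le_mul_right K (by omega)
              omega
            refine ⟨r - (K*K - K), Or.inl ?_, 2*T + (K-1)*K - 1,
              Or.inr ⟨K-1, by omega, rfl⟩, ?_⟩ <;>
            · have : (K-1)*K = K*K - K := by rw [Nat.sub_mul]; omega
              omega
        · -- top region
          set r := x - (3*T + K*K - K - 1) with hr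
          have hrK : r < K*K := by omega
          have hj : r / K < K := Nat.div_lt_of_lt_mul (by omega)
          have hdm : (r/K)*K + r % K = r := by
            rw [mul_comm]; exact Nat.div_add_mod r K
          have hmod : r % K < K := Nat.mod_lt r (by omega)
          exact ⟨T + K*K - K + r % K, Or.inr ⟨r % K, hmod, rfl⟩,
            2*T + (r/K)*K - 1, Or.inr ⟨r/K, hj, rfl⟩, by omega⟩
  rw [hset, Finset.card_range]

/-- For `K = L = nᵏ`, `T = nᵐ` (`m ≥ k ≥ 2`), the degree-table sumset has exactly
`2n²ᵏ + 3nᵐ − nᵏ − 1` elements. -/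
theorem sumset_card_nk_nm (n k m : ℕ) (hn : 2 ≤ n) (hk : 2 ≤ k) (hm : k ≤ m) :
    ((Finset.range (n^m) ∪
        (Finset.range (n^k)).image (fun i => n^m + n^(2*k) - n^k + i)) +
     (Finset.range (n^m) ∪
        (Finset.range (n^k)).image (fun j => 2 * n^m + j * n^k - 1))).card
      = 2 * n^(2*k) + 3 * n^m - n^k - 1 := by
  have h2 : n^(2*k) = n^k * n^k := by rw [two_mul, pow_add]
  rw [h2]
  exact key (n^k) (n^m) (by calc 4 = 2^2 := rfl
        _ ≤ n^k := Nat.pow_le_pow_left hn 2 |>.trans (Nat.pow_le_pow_right (by omega) hk))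
    (Nat.pow_le_pow_right (by omega) hm)
end

section
/- Let n, k ≥ 2 and r be natural numbers with 0 ≤ r < n²ᵏ − nᵏ + 1. Define α₁ = (0,...,nᵏ+r−1), α₂ = (n²ᵏ, n²ᵏ+1, ..., n²ᵏ+nᵏ−1), β₁ = (0,...,nᵏ+r−1), and β₂ = (2nᵏ+2r−1, 3nᵏ+2r−1, ..., n²ᵏ+nᵏ+2r−1) (the nᵏ integers of the form jnᵏ+2r−1 for j = 2,...,nᵏ+1). Then the sumset {αᵢ + βⱼ} has cardinality 2n²ᵏ + 2nᵏ + 2r − 1. -/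
open Finset Pointwise

/-- For `K = L = nᵏ`, `T = nᵏ + r` with `0 ≤ r < n²ᵏ − nᵏ + 1`, the degree-table sumset
has exactly `2n²ᵏ + 2nᵏ + 2r − 1` elements. -/
theorem sumset_card_nk_plus_r (n k r : ℕ) (hn : 2 ≤ n) (hk : 2 ≤ k)
    (hr : r < n^(2*k) - n^k + 1) :
    ((Finset.range (n^k + r) ∪
        (Finset.range (n^k)).image (fun i => n^(2*k) + i)) +
     (Finset.range (n^k + r) ∪
        (Finset.range (n^k)).image (fun j => (j + 2) * n^k + 2 * r - 1))).card
      = 2 * n^(2*k) + 2 * n^k + 2 * r - 1 := by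
  set N := n^k with hN
  set M := n^(2*k) with hM
  have hMN : M = N * N := by
    rw [hM, hN, ← pow_add]; ring_nf
  have hN4 : 4 ≤ N := by
    calc (4:ℕ) = 2^2 := by norm_num
    _ ≤ n^k := Nat.pow_le_pow_left hn k |>.trans' (Nat.pow_le_pow_right (by omega) hk) |>.trans
        (le_refl _)
  have hNM : N ≤ M := by nlinarith
  have hrM : r ≤ M - N := by omega
  have hrM' : r + N ≤ M := by omega
  have key : ((Finset.range (N + r) ∪
        (Finset.range N).image (fun i => M + i)) +
     (Finset.range (N + r) ∪
        (Finset.range N).image (fun j => (j + 2) * N + 2 * r - 1)))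
      = Finset.range (2 * M + 2 * N + 2 * r - 1) := by
    ext x
    simp only [Finset.mem_add, Finset.mem_union, Finset.mem_image, Finset.mem_range]
    constructor
    · rintro ⟨a, (ha | ⟨i, hi, rfl⟩), b, (hb | ⟨j, hj, rfl⟩), rfl⟩
      · omega
      · have hb2 : (j + 2) * N ≤ N * N + N := by nlinarith
        omega
      · omega
      · have hb2 : (j + 2) * N ≤ N * N + N := by nlinarith
        omega
    · intro hx
      rcases le_or_gt x (2 * N + 2 * r - 2) with h1 | h1
      · -- both from range (N + r)
        rcases le_or_gt x (N + r - 1) with h2 | h2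
        · exact ⟨x, Or.inl (by omega), 0, Or.inl (by omega), by omega⟩
        · exact ⟨N + r - 1, Or.inl (by omega), x - (N + r - 1), Or.inl (by omega), by omega⟩
      rcases le_or_gt x (M + 2 * N + 2 * r - 2) with h2 | h2
      · -- a from range (N+r), b from second image
        set y := x - (2 * N + 2 * r - 1) with hy
        have hyM : y < N * N := by omega
        have hdm := Nat.div_add_mod y N
        have hmod : y % N < N := Nat.mod_lt _ (by omega)
        have hdiv : y / N < N := Nat.div_lt_of_lt_mul (by omega)
        refine ⟨y % N, Or.inl (by omega), (y / N + 2) * N + 2 * r - 1,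
          Or.inr ⟨y / N, hdiv, rfl⟩, ?_⟩
        have e : (y / N + 2) * N = N * (y / N) + 2 * N := by ring
        omega
      · -- both from images
        set y := x - (M + 2 * N + 2 * r - 1) with hy
        have hyM : y < N * N := by omega
        have hdm := Nat.div_add_mod y N
        have hmod : y % N < N := Nat.mod_lt _ (by omega)
        have hdiv : y / N < N := Nat.div_lt_of_lt_mul (by omega)
        refine ⟨M + y % N, Or.inr ⟨y % N, hmod, rfl⟩, (y / N + 2) * N + 2 * r - 1,
          Or.inr ⟨y / N, hdiv, rfl⟩, ?_⟩
        have e : (y / N + 2) * N = N * (y / N) + 2 * N := by ring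
        omega
  rw [key, Finset.card_range]
end

section
/- Let K ≥ T ≥ 1 be natural numbers. Define α₁ = (0,1,...,T−1), α₂ = (2T−1, 3T−1, ..., KT+T−1) (the K integers jT−1 for j = 2,...,K+1), β₁ = (0,1,...,T−1), and β₂ = (KT, KT+1, ..., KT+T−1). Then the sumset {αᵢ + βⱼ : αᵢ ∈ α₁∪α₂, βⱼ ∈ β₁∪β₂} has cardinality 2KT + 2T − 1. -/
open Finset Pointwise

lemma decomp_aux (K T y : ℕ) (hT : 1 ≤ T) (hK : 1 ≤ K)
    (h1 : 2 * T - 1 ≤ y) (h2 : y ≤ K * T + 2 * T - 2) :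
    ∃ j < K, ∃ i < T, (j + 2) * T - 1 + i = y := by
  have hmod := Nat.div_add_mod (y + 1) T
  have hrlt : (y + 1) % T < T := Nat.mod_lt _ (by omega)
  have hq2 : 2 ≤ (y + 1) / T := by
    rw [Nat.le_div_iff_mul_le (by omega)]; omega
  have hqK : (y + 1) / T < K + 2 := by
    rw [Nat.div_lt_iff_lt_mul (by omega)]
    have : (K + 2) * T = K * T + 2 * T := by ring
    omega
  refine ⟨(y + 1) / T - 2, by omega, (y + 1) % T, hrlt, ?_⟩
  have he : ((y + 1) / T - 2 + 2) = (y + 1) / T := by omega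
  rw [he]
  have hc : (y + 1) / T * T = T * ((y + 1) / T) := Nat.mul_comm _ _
  have hge : 2 * T ≤ ((y + 1) / T) * T := Nat.mul_le_mul_right _ hq2
  omega

/-- For `K ≥ L = T` the degree-table sumset has exactly `2KT + 2T − 1` elements. -/
theorem sumset_card_K_T (K T : ℕ) (hT : 1 ≤ T) (hK : T ≤ K) :
    ((Finset.range T ∪ (Finset.range K).image (fun j => (j + 2) * T - 1)) +
     (Finset.range T ∪ (Finset.range T).image (fun i => K * T + i))).card
      = 2 * K * T + 2 * T - 1 := by
  have hK1 : 1 ≤ K := le_trans hT hK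
  have hTK : T ≤ K * T := by
    calc T = 1 * T := (one_mul T).symm
    _ ≤ K * T := Nat.mul_le_mul_right _ hK1
  have h2KT : 2 * K * T = K * T + K * T := by ring
  have hset : ((Finset.range T ∪ (Finset.range K).image (fun j => (j + 2) * T - 1)) +
      (Finset.range T ∪ (Finset.range T).image (fun i => K * T + i)))
      = Finset.range (2 * K * T + 2 * T - 1) := by
    ext x
    simp only [Finset.mem_add, Finset.mem_union, Finset.mem_range, Finset.mem_image]
    constructor
    · rintro ⟨a, ha, b, hb, rfl⟩
      have hA : a ≤ K * T + T - 1 := by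
        rcases ha with h | ⟨j, hj, rfl⟩
        · omega
        · have h1 : (j + 2) * T ≤ (K + 1) * T := Nat.mul_le_mul_right _ (by omega)
          have h2 : (K + 1) * T = K * T + T := by ring
          omega
      have hB : b ≤ K * T + T - 1 := by
        rcases hb with h | ⟨i, hi, rfl⟩ <;> omega
      omega
    · intro hx
      by_cases hc1 : x < T
      · exact ⟨x, Or.inl hc1, 0, Or.inl (by omega), by omega⟩
      · by_cases hc2 : x ≤ 2 * T - 2
        · exact ⟨T - 1, Or.inl (by omega), x - (T - 1), Or.inl (by omega), by omega⟩
        · by_cases hc3 : x ≤ K * T + 2 * T - 2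
          · obtain ⟨j, hj, i, hi, hji⟩ := decomp_aux K T x hT hK1 (by omega) hc3
            exact ⟨(j + 2) * T - 1, Or.inr ⟨j, hj, rfl⟩, i, Or.inl hi, hji⟩
          · obtain ⟨j, hj, i, hi, hji⟩ := decomp_aux K T (x - K * T) hT hK1 (by omega) (by omega)
            exact ⟨(j + 2) * T - 1, Or.inr ⟨j, hj, rfl⟩, K * T + i, Or.inr ⟨i, hi, rfl⟩, by omega⟩
  rw [hset, Finset.card_range]
end

section
/- Let n ≥ 2 and k ≥ ℓ ≥ 1 be natural numbers. Define α₁ = (0,...,nᵏ−1), α₂ = (n^{ℓ+k}, n^{ℓ+k}+1, ..., n^{ℓ+k}+nᵏ−1), β₁ = (0,...,nᵏ−1), and β₂ = (2nᵏ−1, 3nᵏ−1, ..., n^{k+ℓ}+nᵏ−1) (the n^ℓ integers jnᵏ−1 for j = 2,...,n^ℓ+1). Then the sumset {αᵢ+βⱼ} has cardinality 2n^{k+ℓ} + 2nᵏ − 1. -/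
open Finset Pointwise

theorem sumset_aux (K L : ℕ) (hK : 2 ≤ K) (hL : 2 ≤ L) :
    ((Finset.range K ∪ (Finset.range K).image (fun i => L * K + i)) +
     (Finset.range K ∪ (Finset.range L).image (fun j => (j + 2) * K - 1))) =
      Finset.range (2 * (L * K) + 2 * K - 1) := by
  ext x
  simp only [Finset.mem_add, mem_union, mem_image, mem_range]
  constructor
  · rintro ⟨a, (ha | ⟨i, hi, rfl⟩), b, (hb | ⟨j, hj, rfl⟩), rfl⟩
    · omega
    · have h1 : (j + 2) * K ≤ (L + 1) * K := Nat.mul_le_mul (by omega) (le_refl K)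
      have h2 : (L + 1) * K = L * K + K := by ring
      omega
    · omega
    · have h1 : (j + 2) * K ≤ (L + 1) * K := Nat.mul_le_mul (by omega) (le_refl K)
      have h2 : (L + 1) * K = L * K + K := by ring
      omega
  · intro hx
    by_cases h1 : x < 2 * K - 1
    · by_cases h2 : x < K
      · exact ⟨0, Or.inl (by omega), x, Or.inl h2, by omega⟩
      · exact ⟨x - (K - 1), Or.inl (by omega), K - 1, Or.inl (by omega), by omega⟩
    · by_cases h3 : x < L * K + 2 * K - 1
      · set y := x + 1 - 2 * K with hy
        have hylt : y < L * K := by omega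
        have hmod : y % K < K := Nat.mod_lt _ (by omega)
        have hdiv : y / K < L := Nat.div_lt_of_lt_mul (by rw [mul_comm]; exact hylt)
        have hmd : y % K + y / K * K = y := Nat.mod_add_div' y K
        refine ⟨y % K, Or.inl hmod, (y / K + 2) * K - 1, Or.inr ⟨y / K, hdiv, rfl⟩, ?_⟩
        have hexp : (y / K + 2) * K = y / K * K + 2 * K := by ring
        omega
      · set y := x + 1 - 2 * K - L * K with hy
        have hylt : y < L * K := by omega
        have hmod : y % K < K := Nat.mod_lt _ (by omega)
        have hdiv : y / K < L := Nat.div_lt_of_lt_mul (by rw [mul_comm]; exact hylt)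
        have hmd : y % K + y / K * K = y := Nat.mod_add_div' y K
        refine ⟨L * K + y % K, Or.inr ⟨y % K, hmod, rfl⟩,
          (y / K + 2) * K - 1, Or.inr ⟨y / K, hdiv, rfl⟩, ?_⟩
        have hexp : (y / K + 2) * K = y / K * K + 2 * K := by ring
        omega

/-- For `K = T = nᵏ`, `L = nˡ` with `k ≥ ℓ ≥ 1`, the degree-table sumset has exactly
`2n^(k+ℓ) + 2nᵏ − 1` elements. -/
theorem sumset_card_nk_nl (n k ℓ : ℕ) (hn : 2 ≤ n) (hℓ : 1 ≤ ℓ) (hk : ℓ ≤ k) :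
    ((Finset.range (n^k) ∪ (Finset.range (n^k)).image (fun i => n^(ℓ+k) + i)) +
     (Finset.range (n^k) ∪ (Finset.range (n^ℓ)).image (fun j => (j + 2) * n^k - 1))).card
      = 2 * n^(k+ℓ) + 2 * n^k - 1 := by
  have hK : 2 ≤ n ^ k := le_trans hn (Nat.le_self_pow (by omega) n)
  have hL : 2 ≤ n ^ ℓ := le_trans hn (Nat.le_self_pow (by omega) n)
  have h1 : n ^ (ℓ + k) = n ^ ℓ * n ^ k := pow_add n ℓ k
  rw [h1, sumset_aux (n ^ k) (n ^ ℓ) hK hL, card_range]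
  have h2 : n ^ (k + ℓ) = n ^ k * n ^ ℓ := pow_add n k ℓ
  have h3 : n ^ ℓ * n ^ k = n ^ k * n ^ ℓ := mul_comm _ _
  omega
end

section
/- For natural numbers n > 1, the ratio of the quantum rate R_Q(n²,n²,n²) = 2n⁴/(2n⁴+2n²−1) to the classical GASP rate R_C(n²,n²,n²) = n⁴/(n⁴+2n³+2n²−n−2) equals (2n⁴+4n³+4n²−2n−4)/(2n⁴+2n²−1), and this ratio is strictly greater than 1 for all n > 1 and tends to 1 as n → ∞. -/
open Filter

/-- The ratio of the quantum rate `R_Q(n²,n²,n²) = 2n⁴/(2n⁴+2n²−1)` to the classical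
GASP rate `R_C(n²,n²,n²) = n⁴/(n⁴+2n³+2n²−n−2)` equals
`(2n⁴+4n³+4n²−2n−4)/(2n⁴+2n²−1)`; it is strictly greater than `1` for all `n > 1`
and tends to `1` as `n → ∞`. -/
theorem rate_ratio_n2 :
    (∀ n : ℕ, 1 < n →
      (2 * (n : ℚ)^4 / (2 * (n : ℚ)^4 + 2 * (n : ℚ)^2 - 1)) /
          ((n : ℚ)^4 / ((n : ℚ)^4 + 2 * (n : ℚ)^3 + 2 * (n : ℚ)^2 - (n : ℚ) - 2))
        = (2 * (n : ℚ)^4 + 4 * (n : ℚ)^3 + 4 * (n : ℚ)^2 - 2 * (n : ℚ) - 4) /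
            (2 * (n : ℚ)^4 + 2 * (n : ℚ)^2 - 1) ∧
      1 < (2 * (n : ℚ)^4 + 4 * (n : ℚ)^3 + 4 * (n : ℚ)^2 - 2 * (n : ℚ) - 4) /
            (2 * (n : ℚ)^4 + 2 * (n : ℚ)^2 - 1)) ∧
    Tendsto (fun n : ℕ =>
        (2 * (n : ℝ)^4 + 4 * (n : ℝ)^3 + 4 * (n : ℝ)^2 - 2 * (n : ℝ) - 4) /
          (2 * (n : ℝ)^4 + 2 * (n : ℝ)^2 - 1))
      atTop (nhds 1) := by
  constructor
  · intro n hn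
    have h2 : (2 : ℚ) ≤ (n : ℚ) := by exact_mod_cast hn
    have hd1 : (0:ℚ) < 2 * (n : ℚ)^4 + 2 * (n : ℚ)^2 - 1 := by nlinarith
    have hd2 : (0:ℚ) < (n : ℚ)^4 + 2 * (n : ℚ)^3 + 2 * (n : ℚ)^2 - (n : ℚ) - 2 := by
      nlinarith
    have hn0 : (0:ℚ) < (n : ℚ)^4 := by positivity
    constructor
    · field_simp
      ring
    · rw [lt_div_iff₀ hd1]
      nlinarith
  · have key : Tendsto (fun n : ℕ =>
        (2 + 4 * ((n:ℝ))⁻¹ + 4 * ((n:ℝ))⁻¹^2 - 2 * ((n:ℝ))⁻¹^3 - 4 * ((n:ℝ))⁻¹^4) /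
          (2 + 2 * ((n:ℝ))⁻¹^2 - ((n:ℝ))⁻¹^4)) atTop (nhds 1) := by
      have h := tendsto_inv_atTop_zero.comp (tendsto_natCast_atTop_atTop (R := ℝ))
      have : Tendsto (fun n : ℕ =>
          (2 + 4 * ((n:ℝ))⁻¹ + 4 * ((n:ℝ))⁻¹^2 - 2 * ((n:ℝ))⁻¹^3 - 4 * ((n:ℝ))⁻¹^4) /
            (2 + 2 * ((n:ℝ))⁻¹^2 - ((n:ℝ))⁻¹^4)) atTop
          (nhds ((2 + 4 * 0 + 4 * 0^2 - 2 * 0^3 - 4 * 0^4) / (2 + 2 * 0^2 - 0^4))) := by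
        apply Tendsto.div
        · exact ((((tendsto_const_nhds.add (h.const_mul 4)).add
            ((h.pow 2).const_mul 4)).sub ((h.pow 3).const_mul 2)).sub ((h.pow 4).const_mul 4))
        · exact (tendsto_const_nhds.add ((h.pow 2).const_mul 2)).sub (h.pow 4)
        · norm_num
      simpa using this
    refine key.congr' ?_
    filter_upwards [eventually_gt_atTop 0] with n hn
    have hn' : (0:ℝ) < (n:ℝ) := by exact_mod_cast hn
    have h1 : (1:ℝ) ≤ (n:ℝ) := by exact_mod_cast hn
    have hx : ((n:ℝ))⁻¹ ≤ 1 := inv_le_one_of_one_le₀ h1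
    have hx0 : (0:ℝ) < ((n:ℝ))⁻¹ := by positivity
    have hx4 : ((n:ℝ))⁻¹^4 ≤ 1 := pow_le_one₀ hx0.le hx
    have hd1 : (0:ℝ) < 2 + 2 * ((n:ℝ))⁻¹^2 - ((n:ℝ))⁻¹^4 := by nlinarith [sq_nonneg ((n:ℝ))⁻¹]
    have hd2 : (0:ℝ) < 2 * (n:ℝ)^4 + 2 * (n:ℝ)^2 - 1 := by nlinarith
    rw [div_eq_div_iff hd1.ne' hd2.ne']
    field_simp
end

section
/- Let L ≥ 2 and T ≥ 1 with L ≥ T. Define α₁ = (0,...,L−1), α₂ = (L²+T−1, L²+T, ..., L²+L+T−3, 2L²+2T−3) (L−1 consecutive integers followed by one extra element), β₁ = (0,...,T−1), and β₂ = (T+L−2, T+2L−3, ..., L²−L+T−1) (the L integers T−1+j(L−1) for j=1,…,L). Then each of the L² sums α₂(i)+β₂(j) for i,j in the information blocks are distinct from one another and from all sums involving α₁ or β₁, whenever L + T ≥ 7. -/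
private lemma aux_unique (m i i' j j' : ℕ) (hm : 0 < m) (hi : i < m) (hi' : i' < m)
    (h : i + j * m = i' + j' * m) : i = i' ∧ j = j' := by
  have h1 : (i + j * m) % m = i := by
    rw [Nat.add_mul_mod_self_right, Nat.mod_eq_of_lt hi]
  have h2 : (i' + j' * m) % m = i' := by
    rw [Nat.add_mul_mod_self_right, Nat.mod_eq_of_lt hi']
  have h3 : (i + j * m) / m = j := by
    rw [Nat.add_mul_div_right _ _ hm, Nat.div_eq_of_lt hi]
    omega
  have h4 : (i' + j' * m) / m = j' := by
    rw [Nat.add_mul_div_right _ _ hm, Nat.div_eq_of_lt hi']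
    omega
  constructor
  · rw [← h1, ← h2, h]
  · rw [← h3, ← h4, h]

/-- Decodability of the quantum PDMM code in the regime `K = L > T`: for `L ≥ 2`,
`T ≥ 1`, `L ≥ T` and `L + T ≥ 7`, with
`α₁ = (0,…,L−1)`, `α₂ = (L²+T−1, …, L²+L+T−3, 2L²+2T−3)`, `β₁ = (0,…,T−1)`, and
`β₂(j) = T−1+(j+1)(L−1)` for `j = 0,…,L−1`, the `L²` information sums `α₂(i)+β₂(j)`
are pairwise distinct and distinct from every sum involving `α₁` or `β₁`. -/
theorem low_privacy_decodability (L T : ℕ) (hL : 2 ≤ L) (hT : 1 ≤ T) (hTL : T ≤ L)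
    (h7 : 7 ≤ L + T) :
    ∀ (α₁ : Fin L → ℕ) (α₂ : Fin L → ℕ) (β₁ : Fin T → ℕ) (β₂ : Fin L → ℕ),
      (∀ i, α₁ i = (i : ℕ)) →
      (∀ i, α₂ i = if (i : ℕ) < L - 1 then L^2 + T - 1 + (i : ℕ) else 2 * L^2 + 2 * T - 3) →
      (∀ j, β₁ j = (j : ℕ)) →
      (∀ j, β₂ j = T - 1 + ((j : ℕ) + 1) * (L - 1)) →
      ((∀ i j i' j', α₂ i + β₂ j = α₂ i' + β₂ j' → i = i' ∧ j = j') ∧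
       (∀ i j i' j', α₂ i + β₂ j ≠ α₁ i' + β₁ j') ∧
       (∀ i j i' j', α₂ i + β₂ j ≠ α₁ i' + β₂ j') ∧
       (∀ i j i' j', α₂ i + β₂ j ≠ α₂ i' + β₁ j')) := by
  intro α₁ α₂ β₁ β₂ hα₁ hα₂ hβ₁ hβ₂
  have hL4 : 4 ≤ L := by omega
  obtain ⟨Q, hQ⟩ : ∃ Q, L * L = Q := ⟨_, rfl⟩
  have hQ4 : 4 * L ≤ Q := by rw [← hQ]; exact Nat.mul_le_mul_right L hL4
  have hQL : L * (L - 1) + L = Q := by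
    rw [← hQ]
    have : L * (L - 1) + L = L * ((L - 1) + 1) := by ring
    rw [this]
    congr 1
    omega
  have hpow : L ^ 2 = Q := by rw [pow_two, hQ]
  have pbound : ∀ j : Fin L, L - 1 ≤ ((j : ℕ) + 1) * (L - 1) ∧
      ((j : ℕ) + 1) * (L - 1) + L ≤ Q := by
    intro j
    constructor
    · calc L - 1 = 1 * (L - 1) := (one_mul _).symm
        _ ≤ ((j : ℕ) + 1) * (L - 1) := Nat.mul_le_mul_right _ (by omega)
    · have : ((j : ℕ) + 1) * (L - 1) ≤ L * (L - 1) :=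
        Nat.mul_le_mul_right _ (by omega)
      omega
  refine ⟨?_, ?_, ?_, ?_⟩
  · -- pairwise distinct information sums
    intro i j i' j' h
    rw [hα₂ i, hα₂ i', hβ₂ j, hβ₂ j'] at h
    obtain ⟨hb1, hb2⟩ := pbound j
    obtain ⟨hb1', hb2'⟩ := pbound j'
    by_cases hi : (i : ℕ) < L - 1 <;> by_cases hi' : (i' : ℕ) < L - 1 <;>
      simp only [hi, hi', if_true, if_false, hpow] at h
    · -- both in first block
      have h' : (i : ℕ) + ((j : ℕ) + 1) * (L - 1) = (i' : ℕ) + ((j' : ℕ) + 1) * (L - 1) := by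
        obtain ⟨a, ha⟩ : ∃ a, ((j : ℕ) + 1) * (L - 1) = a := ⟨_, rfl⟩
        obtain ⟨b, hb⟩ : ∃ b, ((j' : ℕ) + 1) * (L - 1) = b := ⟨_, rfl⟩
        rw [ha, hb] at h ⊢
        omega
      obtain ⟨h1, h2⟩ := aux_unique (L - 1) i i' ((j : ℕ) + 1) ((j' : ℕ) + 1)
        (by omega) hi hi' h'
      exact ⟨Fin.ext h1, Fin.ext (by omega)⟩
    · exfalso
      obtain ⟨a, ha⟩ : ∃ a, ((j : ℕ) + 1) * (L - 1) = a := ⟨_, rfl⟩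
      obtain ⟨b, hb⟩ : ∃ b, ((j' : ℕ) + 1) * (L - 1) = b := ⟨_, rfl⟩
      rw [ha] at h hb1 hb2
      rw [hb] at h hb1' hb2'
      omega
    · exfalso
      obtain ⟨a, ha⟩ : ∃ a, ((j : ℕ) + 1) * (L - 1) = a := ⟨_, rfl⟩
      obtain ⟨b, hb⟩ : ∃ b, ((j' : ℕ) + 1) * (L - 1) = b := ⟨_, rfl⟩
      rw [ha] at h hb1 hb2
      rw [hb] at h hb1' hb2'
      omega
    · -- both last: i = i' = L-1, and products equal
      have hiv : (i : ℕ) = L - 1 := by have := i.isLt; omega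
      have hiv' : (i' : ℕ) = L - 1 := by have := i'.isLt; omega
      have h' : ((j : ℕ) + 1) * (L - 1) = ((j' : ℕ) + 1) * (L - 1) := by
        obtain ⟨a, ha⟩ : ∃ a, ((j : ℕ) + 1) * (L - 1) = a := ⟨_, rfl⟩
        obtain ⟨b, hb⟩ : ∃ b, ((j' : ℕ) + 1) * (L - 1) = b := ⟨_, rfl⟩
        rw [ha, hb] at h ⊢
        omega
      have hj : (j : ℕ) + 1 = (j' : ℕ) + 1 :=
        Nat.eq_of_mul_eq_mul_right (by omega) h'
      exact ⟨Fin.ext (by omega), Fin.ext (by omega)⟩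
  · -- vs α₁ + β₁
    intro i j i' j' h
    rw [hα₂ i, hβ₂ j, hα₁ i', hβ₁ j'] at h
    obtain ⟨hb1, hb2⟩ := pbound j
    have hi' := i'.isLt
    have hj' := j'.isLt
    by_cases hi : (i : ℕ) < L - 1 <;>
      simp only [hi, if_true, if_false, hpow] at h <;>
      · obtain ⟨a, ha⟩ : ∃ a, ((j : ℕ) + 1) * (L - 1) = a := ⟨_, rfl⟩
        rw [ha] at h hb1 hb2
        omega
  · -- vs α₁ + β₂
    intro i j i' j' h
    rw [hα₂ i, hβ₂ j, hα₁ i', hβ₂ j'] at h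
    obtain ⟨hb1, hb2⟩ := pbound j
    obtain ⟨hb1', hb2'⟩ := pbound j'
    have hi' := i'.isLt
    by_cases hi : (i : ℕ) < L - 1 <;>
      simp only [hi, if_true, if_false, hpow] at h <;>
      · obtain ⟨a, ha⟩ : ∃ a, ((j : ℕ) + 1) * (L - 1) = a := ⟨_, rfl⟩
        obtain ⟨b, hb⟩ : ∃ b, ((j' : ℕ) + 1) * (L - 1) = b := ⟨_, rfl⟩
        rw [ha] at h hb1 hb2
        rw [hb] at h hb1' hb2'
        omega
  · -- vs α₂ + β₁
    intro i j i' j' h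
    rw [hα₂ i, hβ₂ j, hα₂ i', hβ₁ j'] at h
    obtain ⟨hb1, hb2⟩ := pbound j
    have hj' := j'.isLt
    have hiL := i.isLt
    have hiL' := i'.isLt
    by_cases hi : (i : ℕ) < L - 1 <;> by_cases hi' : (i' : ℕ) < L - 1 <;>
      simp only [hi, hi', if_true, if_false, hpow] at h <;>
      · obtain ⟨a, ha⟩ : ∃ a, ((j : ℕ) + 1) * (L - 1) = a := ⟨_, rfl⟩
        rw [ha] at h hb1 hb2
        omega
end
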